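/- If M and N are models of KP^P and N is a powerset-preserving end extension of M, then N is a rank extension of M: for all x, y ∈ N, if y ∈ M and N ⊨ ρ(x) ≤ ρ(y), then x ∈ M. -/

import Mathlib

universe u

/-- de Bruijn-style formulas of the language of set theory, with primitive
bounded quantifiers (`∈`-bounded and `⊆`-bounded) and unbounded quantifiers.
`SF n` is the type of formulas with (at most) `n` free variables. -/
inductive SF : ℕ → Type
  | mem {n} (i j : Fin n) : SF n
  | eq {n} (i j : Fin n) : SF n
  | not {n} (φ : SF n) : SF n
  | and {n} (φ ψ : SF n) : SF n
  | or {n} (φ ψ : SF n) : SF n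
  | bexMem {n} (i : Fin n) (φ : SF (n + 1)) : SF n
  | ballMem {n} (i : Fin n) (φ : SF (n + 1)) : SF n
  | bexSub {n} (i : Fin n) (φ : SF (n + 1)) : SF n
  | ballSub {n} (i : Fin n) (φ : SF (n + 1)) : SF n
  | ex {n} (φ : SF (n + 1)) : SF n
  | all {n} (φ : SF (n + 1)) : SF n

variable {X : Type u}

/-- `a ⊆ b` in the structure `⟨X, E⟩`. -/
def SubE (E : X → X → Prop) (a b : X) : Prop := ∀ z, E z a → E z b

/-- Satisfaction of a formula in the structure `⟨X, E⟩` under a valuation. -/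
def SF.Eval (E : X → X → Prop) : {n : ℕ} → SF n → (Fin n → X) → Prop
  | _, .mem i j, v => E (v i) (v j)
  | _, .eq i j, v => v i = v j
  | _, .not φ, v => ¬ φ.Eval E v
  | _, .and φ ψ, v => φ.Eval E v ∧ ψ.Eval E v
  | _, .or φ ψ, v => φ.Eval E v ∨ ψ.Eval E v
  | _, .bexMem i φ, v => ∃ x, E x (v i) ∧ φ.Eval E (Fin.snoc v x)
  | _, .ballMem i φ, v => ∀ x, E x (v i) → φ.Eval E (Fin.snoc v x)
  | _, .bexSub i φ, v => ∃ x, SubE E x (v i) ∧ φ.Eval E (Fin.snoc v x)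
  | _, .ballSub i φ, v => ∀ x, SubE E x (v i) → φ.Eval E (Fin.snoc v x)
  | _, .ex φ, v => ∃ x, φ.Eval E (Fin.snoc v x)
  | _, .all φ, v => ∀ x, φ.Eval E (Fin.snoc v x)

/-- `Δ₀` formulas: only `∈`-bounded quantifiers. -/
def SF.IsDelta0 : {n : ℕ} → SF n → Prop
  | _, .mem _ _ => True
  | _, .eq _ _ => True
  | _, .not φ => φ.IsDelta0
  | _, .and φ ψ => φ.IsDelta0 ∧ ψ.IsDelta0
  | _, .or φ ψ => φ.IsDelta0 ∧ ψ.IsDelta0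
  | _, .bexMem _ φ => φ.IsDelta0
  | _, .ballMem _ φ => φ.IsDelta0
  | _, .bexSub _ _ => False
  | _, .ballSub _ _ => False
  | _, .ex _ => False
  | _, .all _ => False

/-- Takahashi's class `Δ₀^𝒫`: only `∈`-bounded and `⊆`-bounded quantifiers. -/
def SF.IsDelta0P : {n : ℕ} → SF n → Prop
  | _, .mem _ _ => True
  | _, .eq _ _ => True
  | _, .not φ => φ.IsDelta0P
  | _, .and φ ψ => φ.IsDelta0P ∧ ψ.IsDelta0P
  | _, .or φ ψ => φ.IsDelta0P ∧ ψ.IsDelta0P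
  | _, .bexMem _ φ => φ.IsDelta0P
  | _, .ballMem _ φ => φ.IsDelta0P
  | _, .bexSub _ φ => φ.IsDelta0P
  | _, .ballSub _ φ => φ.IsDelta0P
  | _, .ex _ => False
  | _, .all _ => False

def Delta0C : ∀ n, SF n → Prop := fun _ φ => φ.IsDelta0
def Delta0PC : ∀ n, SF n → Prop := fun _ φ => φ.IsDelta0P
def Sigma1C : ∀ n, SF n → Prop := fun _ φ => ∃ ψ, ψ.IsDelta0 ∧ φ = SF.ex ψ
def Pi1C : ∀ n, SF n → Prop := fun _ φ => ∃ ψ, ψ.IsDelta0 ∧ φ = SF.all ψ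
def Sigma1PC : ∀ n, SF n → Prop := fun _ φ => ∃ ψ, ψ.IsDelta0P ∧ φ = SF.ex ψ
def Pi1PC : ∀ n, SF n → Prop := fun _ φ => ∃ ψ, ψ.IsDelta0P ∧ φ = SF.all ψ
def FullC : ∀ n, SF n → Prop := fun _ _ => True

/-- A Gödel numbering of formulas. -/
def SF.encode : {n : ℕ} → SF n → ℕ
  | _, .mem i j => Nat.pair 0 (Nat.pair i.val j.val)
  | _, .eq i j => Nat.pair 1 (Nat.pair i.val j.val)
  | _, .not φ => Nat.pair 2 φ.encode
  | _, .and φ ψ => Nat.pair 3 (Nat.pair φ.encode ψ.encode)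
  | _, .or φ ψ => Nat.pair 4 (Nat.pair φ.encode ψ.encode)
  | _, .bexMem i φ => Nat.pair 5 (Nat.pair i.val φ.encode)
  | _, .ballMem i φ => Nat.pair 6 (Nat.pair i.val φ.encode)
  | _, .bexSub i φ => Nat.pair 7 (Nat.pair i.val φ.encode)
  | _, .ballSub i φ => Nat.pair 8 (Nat.pair i.val φ.encode)
  | _, .ex φ => Nat.pair 9 φ.encode
  | _, .all φ => Nat.pair 10 φ.encode

/-- A theory (set of sentences) is recursively enumerable if the set of Gödel
numbers of its members is the domain of a partial recursive function. -/
def REset (S : Set (SF 0)) : Prop :=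
  ∃ f : ℕ →. ℕ, Nat.Partrec f ∧ ∀ φ : SF 0, φ ∈ S ↔ SF.encode φ ∈ f.Dom

/-- `⟨X, E⟩ ⊨ S` for a set `S` of sentences. -/
def SatT (E : X → X → Prop) (S : Set (SF 0)) : Prop :=
  ∀ φ ∈ S, SF.Eval E φ (fun i => i.elim0)

/-! ## Axioms and axiom schemes -/

def ExtensionalityAx (E : X → X → Prop) : Prop := ∀ a b, (∀ z, E z a ↔ E z b) → a = b
def EmptySetAx (E : X → X → Prop) : Prop := ∃ a, ∀ z, ¬ E z a
def PairAx (E : X → X → Prop) : Prop := ∀ x y, ∃ a, ∀ z, E z a ↔ (z = x ∨ z = y)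
def UnionAx (E : X → X → Prop) : Prop := ∀ a, ∃ b, ∀ z, E z b ↔ ∃ y, E y a ∧ E z y
def SetDiffAx (E : X → X → Prop) : Prop := ∀ a b, ∃ c, ∀ z, E z c ↔ (E z a ∧ ¬ E z b)
def PowerAx (E : X → X → Prop) : Prop := ∀ a, ∃ p, ∀ z, E z p ↔ SubE E z a
def TransSet (E : X → X → Prop) (t : X) : Prop := ∀ y, E y t → ∀ z, E z y → E z t
def TCoAx (E : X → X → Prop) : Prop := ∀ a, ∃ t, TransSet E t ∧ SubE E a t
def SuccOf (E : X → X → Prop) (x s : X) : Prop := ∀ z, E z s ↔ (E z x ∨ z = x)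
def InductiveSet (E : X → X → Prop) (a : X) : Prop :=
  (∃ e, E e a ∧ ∀ z, ¬ E z e) ∧ ∀ x, E x a → ∃ s, E s a ∧ SuccOf E x s
def InfinityAx (E : X → X → Prop) : Prop := ∃ a, InductiveSet E a
def SetFoundationAx (E : X → X → Prop) : Prop :=
  ∀ z, (∃ x, E x z) → ∃ y, E y z ∧ ∀ x, E x y → ¬ E x z
/-- The axiom of choice: every set of pairwise disjoint nonempty sets has a transversal. -/
def ACAx (E : X → X → Prop) : Prop :=
  ∀ a, (∀ x, E x a → ∃ z, E z x) →
    (∀ x y, E x a → E y a → x ≠ y → ∀ z, E z x → ¬ E z y) →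
    ∃ c, ∀ x, E x a → ∃! z, E z c ∧ E z x

def SeparationScheme (E : X → X → Prop) (C : ∀ n, SF n → Prop) : Prop :=
  ∀ (n : ℕ) (φ : SF (n + 1)), C _ φ → ∀ (p : Fin n → X) (w : X),
    ∃ y, ∀ x, E x y ↔ (E x w ∧ φ.Eval E (Fin.snoc p x))

def CollectionScheme (E : X → X → Prop) (C : ∀ n, SF n → Prop) : Prop :=
  ∀ (n : ℕ) (φ : SF (n + 2)), C _ φ → ∀ (p : Fin n → X) (w : X),
    (∀ x, E x w → ∃ y, φ.Eval E (Fin.snoc (Fin.snoc p x) y)) →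
    ∃ c, ∀ x, E x w → ∃ y, E y c ∧ φ.Eval E (Fin.snoc (Fin.snoc p x) y)

def FoundationScheme (E : X → X → Prop) (C : ∀ n, SF n → Prop) : Prop :=
  ∀ (n : ℕ) (φ : SF (n + 1)), C _ φ → ∀ p : Fin n → X,
    (∃ x, φ.Eval E (Fin.snoc p x)) →
    ∃ y, φ.Eval E (Fin.snoc p y) ∧ ∀ x, E x y → ¬ φ.Eval E (Fin.snoc p x)

/-! ## Theories -/

def ModelMminus (E : X → X → Prop) : Prop :=
  ExtensionalityAx E ∧ EmptySetAx E ∧ PairAx E ∧ UnionAx E ∧ SetDiffAx E ∧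
    TCoAx E ∧ InfinityAx E ∧ SeparationScheme E Delta0C ∧ SetFoundationAx E

def ModelM (E : X → X → Prop) : Prop := ModelMminus E ∧ PowerAx E

def ModelKP (E : X → X → Prop) : Prop :=
  ExtensionalityAx E ∧ PairAx E ∧ UnionAx E ∧ SeparationScheme E Delta0C ∧
    CollectionScheme E Delta0C ∧ FoundationScheme E Pi1C

def ModelKPP (E : X → X → Prop) : Prop :=
  ModelM E ∧ CollectionScheme E Delta0PC ∧ FoundationScheme E Pi1PC

def ModelMOST (E : X → X → Prop) : Prop :=
  ModelM E ∧ SeparationScheme E Sigma1C ∧ ACAx E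

def ModelZF (E : X → X → Prop) : Prop :=
  ExtensionalityAx E ∧ EmptySetAx E ∧ PairAx E ∧ UnionAx E ∧ PowerAx E ∧
    InfinityAx E ∧ SeparationScheme E FullC ∧ CollectionScheme E FullC ∧
    FoundationScheme E FullC

/-! ## Internal set-theoretic machinery -/

/-- `p = {{x}, {x, y}}` (Kuratowski pair). -/
def IsPair (E : X → X → Prop) (p x y : X) : Prop :=
  ∀ z, E z p ↔ ((∀ w, E w z ↔ w = x) ∨ (∀ w, E w z ↔ (w = x ∨ w = y)))

def FunApp (E : X → X → Prop) (f x y : X) : Prop := ∃ q, E q f ∧ IsPair E q x y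

/-- `f` is a function with domain `d`. -/
def IsFuncOn (E : X → X → Prop) (f d : X) : Prop :=
  (∀ q, E q f → ∃ x y, IsPair E q x y ∧ E x d) ∧
  (∀ x y y', FunApp E f x y → FunApp E f x y' → y = y') ∧
  (∀ x, E x d → ∃ y, FunApp E f x y)

/-- `f` is an injective function from `dom` into `cod`. -/
def InjFunInto (E : X → X → Prop) (f dom cod : X) : Prop :=
  IsFuncOn E f dom ∧ (∀ x y, FunApp E f x y → E y cod) ∧
  (∀ x x' y, FunApp E f x y → FunApp E f x' y → x = x')

/-- `|t| ≤ |κ|`. -/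
def CardLe (E : X → X → Prop) (t κ : X) : Prop := ∃ f, InjFunInto E f t κ

def IsOrdinal (E : X → X → Prop) (x : X) : Prop :=
  TransSet E x ∧ ∀ y, E y x → TransSet E y

/-- An (initial ordinal =) cardinal: an ordinal that does not inject into any of
its members. -/
def IsCardinal (E : X → X → Prop) (κ : X) : Prop :=
  IsOrdinal E κ ∧ ∀ β, E β κ → ¬ CardLe E κ β

/-- `t` is the transitive closure of the set `x`. -/
def IsTCset (E : X → X → Prop) (t x : X) : Prop :=
  TransSet E t ∧ SubE E x t ∧ ∀ u, TransSet E u → SubE E x u → SubE E t u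

/-- `t` is the transitive closure of `{x}`. -/
def IsTCsingleton (E : X → X → Prop) (t x : X) : Prop :=
  TransSet E t ∧ E x t ∧ ∀ u, TransSet E u → E x u → SubE E t u

def IsOmega (E : X → X → Prop) (w : X) : Prop :=
  InductiveSet E w ∧ ∀ a, InductiveSet E a → SubE E w a

/-- `⟨X, E⟩` is `ω`-standard: its internal natural numbers are order-isomorphic
to the standard natural numbers. -/
def OmegaStandard (E : X → X → Prop) : Prop :=
  ∀ w, IsOmega E w → ∃ f : ℕ → X, (∀ n, E (f n) w) ∧ (∀ x, E x w → ∃ n, x = f n) ∧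
    ∀ m n : ℕ, (E (f m) (f n) ↔ m < n)

/-- `f` is (a function coding) the cumulative hierarchy `β ↦ V_β` for `β ∈ α`,
using `V_β = ⋃_{γ∈β} 𝒫(V_γ)`. -/
def IsRK (E : X → X → Prop) (α f : X) : Prop :=
  IsOrdinal E α ∧ IsFuncOn E f α ∧
  ∀ β vβ, E β α → FunApp E f β vβ →
    ∀ x, E x vβ ↔ ∃ γ, E γ β ∧ ∃ vγ, FunApp E f γ vγ ∧ SubE E x vγ

/-- Internal rank comparison `ρ(x) ≤ ρ(y)`: `x` belongs to every stage of the
cumulative hierarchy that `y` belongs to. -/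
def RankLe (E : X → X → Prop) (x y : X) : Prop :=
  ∀ α f β v, IsRK E α f → E β α → FunApp E f β v → E y v → E x v

/-- External `n`-th von Neumann natural number. -/
def IsVN (E : X → X → Prop) : ℕ → X → Prop
  | 0, x => ∀ z, ¬ E z x
  | (n + 1), x => ∃ y, IsVN E n y ∧ SuccOf E y x

/-- `a` is the `n`-th infinite cardinal `ℵ_n` (for external `n`, as computed in
the model): `ℵ₀ = ω`, and `ℵ_{n+1}` is the least cardinal above `ℵ_n`. -/
def IsAleph (E : X → X → Prop) : ℕ → X → Prop
  | 0, a => IsOmega E a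
  | (n + 1), a => ∃ b, IsAleph E n b ∧ IsCardinal E a ∧ E b a ∧
      ∀ c, IsCardinal E c → E b c → (c = a ∨ E a c)

/-- `a` is the cardinal `ℵ_ω` of the model: the least limit cardinal above `ω`. -/
def IsAlephOmega (E : X → X → Prop) (a : X) : Prop :=
  (IsCardinal E a ∧ (∃ w, IsOmega E w ∧ E w a) ∧
    (∀ β, E β a → ∃ μ, IsCardinal E μ ∧ E β μ ∧ E μ a)) ∧
  ∀ a', (IsCardinal E a' ∧ (∃ w, IsOmega E w ∧ E w a') ∧
    (∀ β, E β a' → ∃ μ, IsCardinal E μ ∧ E β μ ∧ E μ a')) → (a = a' ∨ E a a')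

/-! ## Internal satisfaction and the constructible hierarchy (for `V = L`) -/

/-- `c = ⟨n, a⟩` with the tag `n` an external natural (internally coded). -/
def TaggedBy (E : X → X → Prop) (c : X) (n : ℕ) (a : X) : Prop :=
  ∃ t, IsVN E n t ∧ IsPair E c t a

def CodeMem (E : X → X → Prop) (c i j : X) : Prop := ∃ p, IsPair E p i j ∧ TaggedBy E c 0 p
def CodeEq (E : X → X → Prop) (c i j : X) : Prop := ∃ p, IsPair E p i j ∧ TaggedBy E c 1 p
def CodeNot (E : X → X → Prop) (c' c : X) : Prop := TaggedBy E c' 2 c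
def CodeAnd (E : X → X → Prop) (c' c₁ c₂ : X) : Prop := ∃ p, IsPair E p c₁ c₂ ∧ TaggedBy E c' 3 p
def CodeEx (E : X → X → Prop) (c' i c : X) : Prop := ∃ p, IsPair E p i c ∧ TaggedBy E c' 4 p

/-- `d` is closed under the internal formation rules for codes of formulas with
variables indexed by elements of `w` (the internal `ω`). -/
def ClosedCode (E : X → X → Prop) (w d : X) : Prop :=
  (∀ i j c, E i w → E j w → CodeMem E c i j → E c d) ∧
  (∀ i j c, E i w → E j w → CodeEq E c i j → E c d) ∧
  (∀ c c', E c d → CodeNot E c' c → E c' d) ∧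
  (∀ c₁ c₂ c', E c₁ d → E c₂ d → CodeAnd E c' c₁ c₂ → E c' d) ∧
  (∀ i c c', E i w → E c d → CodeEx E c' i c → E c' d)

/-- `c` is an internal code of a first-order formula of the language of set theory. -/
def FormCode (E : X → X → Prop) (w c : X) : Prop := ∀ d, ClosedCode E w d → E c d

/-- An internal assignment of elements of `a` to the variables. -/
def IsAssign (E : X → X → Prop) (w a v : X) : Prop :=
  IsFuncOn E v w ∧ ∀ i y, FunApp E v i y → E y a

/-- `v' = v[i ↦ x]`. -/
def UpdateAssign (E : X → X → Prop) (w v : X) (i x v' : X) : Prop :=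
  FunApp E v' i x ∧ ∀ j, E j w → j ≠ i → ∀ y, (FunApp E v j y ↔ FunApp E v' j y)

def PairIn (E : X → X → Prop) (s c v : X) : Prop := ∃ q, E q s ∧ IsPair E q c v

/-- `s` is a (full) satisfaction class for the set structure `⟨a, E⟩`: a set of
pairs ⟨code, assignment⟩ obeying the Tarski conditions. -/
def SatSet (E : X → X → Prop) (w a s : X) : Prop :=
  (∀ q, E q s → ∃ c v, IsPair E q c v ∧ FormCode E w c ∧ IsAssign E w a v) ∧
  (∀ i j c v xi xj, E i w → E j w → CodeMem E c i j → IsAssign E w a v →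
    FunApp E v i xi → FunApp E v j xj → (PairIn E s c v ↔ E xi xj)) ∧
  (∀ i j c v xi xj, E i w → E j w → CodeEq E c i j → IsAssign E w a v →
    FunApp E v i xi → FunApp E v j xj → (PairIn E s c v ↔ xi = xj)) ∧
  (∀ c c' v, FormCode E w c → CodeNot E c' c → IsAssign E w a v →
    (PairIn E s c' v ↔ ¬ PairIn E s c v)) ∧
  (∀ c₁ c₂ c' v, FormCode E w c₁ → FormCode E w c₂ → CodeAnd E c' c₁ c₂ →
    IsAssign E w a v → (PairIn E s c' v ↔ (PairIn E s c₁ v ∧ PairIn E s c₂ v))) ∧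
  (∀ i c c' v, E i w → FormCode E w c → CodeEx E c' i c → IsAssign E w a v →
    (PairIn E s c' v ↔ ∃ x v', E x a ∧ IsAssign E w a v' ∧ UpdateAssign E w v i x v' ∧
      PairIn E s c v'))

/-- `b` is a subset of `a` definable over `⟨a, E⟩` (with parameters from `a`). -/
def DefSub (E : X → X → Prop) (w a s b : X) : Prop :=
  SubE E b a ∧ ∃ c, FormCode E w c ∧ ∃ v, IsAssign E w a v ∧ ∃ i, E i w ∧
    ∀ x, E x b ↔ (E x a ∧ ∃ v', IsAssign E w a v' ∧ UpdateAssign E w v i x v' ∧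
      PairIn E s c v')

/-- `f` codes the constructible hierarchy `β ↦ L_β` for `β ∈ α`, using
`L_β = ⋃_{γ∈β} Def(L_γ)`. -/
def IsLHier (E : X → X → Prop) (w f α : X) : Prop :=
  IsOrdinal E α ∧ IsFuncOn E f α ∧
  ∀ β vβ, E β α → FunApp E f β vβ →
    ∀ x, E x vβ ↔ ∃ γ, E γ β ∧ ∃ vγ, FunApp E f γ vγ ∧ ∃ s, SatSet E w vγ s ∧
      DefSub E w vγ s x

/-- The axiom `V = L`: every set belongs to some level of the constructible hierarchy. -/
def VeqL (E : X → X → Prop) : Prop :=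
  ∀ w, IsOmega E w → ∀ x, ∃ α f β vβ, IsLHier E w f α ∧ E β α ∧ FunApp E f β vβ ∧ E x vβ

/-! ## Extensions -/

/-- The substructure of `⟨X, E⟩` with underlying set `A`. -/
def restrict (E : X → X → Prop) (A : Set X) : A → A → Prop := fun a b => E a.1 b.1

/-- `B` is an end extension of `A` (both substructures of an ambient `⟨X, E⟩`). -/
def EndExtIn (E : X → X → Prop) (A B : Set X) : Prop :=
  A ⊆ B ∧ ∀ x y, x ∈ B → y ∈ A → E x y → x ∈ A

/-- `B` is a powerset-preserving end extension of `A` (within an ambient `⟨X, E⟩`);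
`x ⊆ y` is computed in `B`. -/
def PowExtIn (E : X → X → Prop) (A B : Set X) : Prop :=
  EndExtIn E A B ∧ ∀ x y, x ∈ B → y ∈ A → (∀ z, z ∈ B → E z x → E z y) → x ∈ A

/-- The whole structure `⟨X, E⟩` is an end extension of its substructure on `A`. -/
def EndExtSet (E : X → X → Prop) (A : Set X) : Prop :=
  ∀ x y, y ∈ A → E x y → x ∈ A

/-- `⟨X, E⟩` is a powerset-preserving end extension of its substructure on `A`. -/
def PowExtSet (E : X → X → Prop) (A : Set X) : Prop :=
  EndExtSet E A ∧ ∀ x y, y ∈ A → SubE E x y → x ∈ A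

/-- `⟨X, E⟩` is a rank extension of its substructure on `A`. -/
def RankExtSet (E : X → X → Prop) (A : Set X) : Prop :=
  PowExtSet E A ∧ ∀ x y, y ∈ A → RankLe E x y → x ∈ A

/-- The extension `⟨X, E⟩` of its substructure on `A` is proper and topless. -/
def ToplessSet (E : X → X → Prop) (A : Set X) : Prop :=
  A ≠ Set.univ ∧ ∀ c, (∀ x, E x c → x ∈ A) → c ∈ A

/-- The extension `⟨X, E⟩` of its substructure on `A` is proper and blunt (not topless). -/
def BluntSet (E : X → X → Prop) (A : Set X) : Prop :=
  A ≠ Set.univ ∧ ¬ ToplessSet E A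

/-! ## Weak dependent choice -/

/-- `δ_ω^φ(b, f, p)`: `f` is a function on `ω` with `f(0) = {b}` tracing the
`φ`-successor relation. -/
def IsWDCWitness (E : X → X → Prop) {n : ℕ} (φ : SF (n + 2)) (p : Fin n → X)
    (w b f : X) : Prop :=
  IsFuncOn E f w ∧
  (∃ z v, (∀ u, ¬ E u z) ∧ E z w ∧ FunApp E f z v ∧ ∀ t, E t v ↔ t = b) ∧
  ∀ m m' vm vm', E m w → SuccOf E m m' → E m' w → FunApp E f m vm → FunApp E f m' vm' →
    ((∀ x, E x vm → ∃ y, E y vm' ∧ φ.Eval E (Fin.snoc (Fin.snoc p x) y)) ∧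
     (∀ y, E y vm' → ∀ x, E x vm → φ.Eval E (Fin.snoc (Fin.snoc p x) y)))

/-- The scheme `Δ₀^𝒫-WDC_ω`. -/
def WDComega (E : X → X → Prop) : Prop :=
  ∀ (n : ℕ) (φ : SF (n + 2)), Delta0PC _ φ → ∀ p : Fin n → X,
    (∀ x, ∃ y, φ.Eval E (Fin.snoc (Fin.snoc p x) y)) →
    ∀ w, IsOmega E w → ∀ b, ∃ f, IsWDCWitness E φ p w b f

/-! ## Internal well-founded extensional relations (for `H_{≤κ}`) -/

def RRel (E : X → X → Prop) (R a b : X) : Prop := ∃ p, E p R ∧ IsPair E p a b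

def RelOn (E : X → X → Prop) (R k : X) : Prop :=
  ∀ p, E p R → ∃ a b, IsPair E p a b ∧ E a k ∧ E b k

/-- `BFEXT(R, k)`: `R ⊆ k × k` is extensional on `k`, has a top element, and every
nonempty subset of `k` has an `R`-minimal element. -/
def BFEXT (E : X → X → Prop) (R k : X) : Prop :=
  RelOn E R k ∧
  (∀ a b, E a k → E b k → (∀ c, E c k → (RRel E R c a ↔ RRel E R c b)) → a = b) ∧
  (∃ t, E t k ∧ ∀ b, E b k → b ≠ t → RRel E R b t) ∧
  (∀ S, SubE E S k → (∃ z, E z S) → ∃ m, E m S ∧ ∀ y, E y S → ¬ RRel E R y m)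

/-- `f` is an isomorphism of `⟨k, R⟩` with `⟨T, ∈⟩`. -/
def IsoOnto (E : X → X → Prop) (R k f T : X) : Prop :=
  IsFuncOn E f k ∧ (∀ x y, FunApp E f x y → E y T) ∧
  (∀ y, E y T → ∃ x, E x k ∧ FunApp E f x y) ∧
  (∀ x x' y, FunApp E f x y → FunApp E f x' y → x = x') ∧
  ∀ a b ya yb, E a k → E b k → FunApp E f a ya → FunApp E f b yb →
    (RRel E R a b ↔ E ya yb)

/-- The predicate `Xv = H_{≤κ} = {x : |TC(x)| ≤ κ}`. -/
def HleqPred (E : X → X → Prop) (Xv κ : X) : Prop :=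
  IsCardinal E κ ∧ ∀ x, E x Xv ↔ ∃ t, IsTCset E t x ∧ CardLe E t κ

/-- The explicit conjunction (i) ∧ (ii) ∧ (iii) asserting `Xv = H_{≤κ}`. -/
def ExplicitH (E : X → X → Prop) (Xv κ : X) : Prop :=
  IsCardinal E κ ∧
  (∀ R, BFEXT E R κ → ∃ x f T, E x Xv ∧ E f Xv ∧ E T Xv ∧ IsTCsingleton E T x ∧
    IsoOnto E R κ f T) ∧
  (∀ x, E x Xv → ∃ T f, E T Xv ∧ E f Xv ∧ IsTCsingleton E T x ∧ InjFunInto E f T κ)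


/-!
In a model of `KP^𝒫` every set `y` lies in a stage `v = V_β` of an internal cumulative
hierarchy `f : α → V` (`β ∈ α`). Otherwise `Π₁^𝒫`-foundation gives an `∈`-least such `y`;
`Δ₀^𝒫`-collection gathers hierarchies witnessing the claim for the elements of `y`; these
agree on common arguments, so their union is again a hierarchy on some `α`, and two successor
steps give `y ⊆ V_α`, `y ∈ V_{α+1}`.

In models of extensionality and pairing, "`y ∈ v = f(β)` for a hierarchy `f` on `α ∋ β`" is
expressed by a `Δ₀^𝒫` formula, and `Δ₀^𝒫` formulas are absolute for powerset-preserving end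
extensions. So the witness `(α, f, β, v)` found in `M` for `y ∈ M` is a witness in `N` as well,
and `N ⊨ ρ(x) ≤ ρ(y)` puts `x` into `v ∈ M`; hence `x ∈ M`.
-/

namespace SF

def relabel : {n m : ℕ} → (Fin n → Fin m) → SF n → SF m
  | _, _, σ, mem i j => mem (σ i) (σ j)
  | _, _, σ, eq i j => eq (σ i) (σ j)
  | _, _, σ, not φ => not (φ.relabel σ)
  | _, _, σ, and φ ψ => and (φ.relabel σ) (ψ.relabel σ)
  | _, _, σ, or φ ψ => or (φ.relabel σ) (ψ.relabel σ)
  | _, m, σ, bexMem i φ => bexMem (σ i) (φ.relabel (Fin.snoc (Fin.castSucc ∘ σ) (Fin.last m)))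
  | _, m, σ, ballMem i φ => ballMem (σ i) (φ.relabel (Fin.snoc (Fin.castSucc ∘ σ) (Fin.last m)))
  | _, m, σ, bexSub i φ => bexSub (σ i) (φ.relabel (Fin.snoc (Fin.castSucc ∘ σ) (Fin.last m)))
  | _, m, σ, ballSub i φ => ballSub (σ i) (φ.relabel (Fin.snoc (Fin.castSucc ∘ σ) (Fin.last m)))
  | _, m, σ, ex φ => ex (φ.relabel (Fin.snoc (Fin.castSucc ∘ σ) (Fin.last m)))
  | _, m, σ, all φ => all (φ.relabel (Fin.snoc (Fin.castSucc ∘ σ) (Fin.last m)))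

def imp {n : ℕ} (φ ψ : SF n) : SF n := or (not φ) ψ

variable {E : X → X → Prop}

lemma snoc_comp_snoc_castSucc {n m : ℕ} (σ : Fin n → Fin m) (v : Fin m → X) (x : X) :
    (Fin.snoc v x : Fin (m + 1) → X) ∘ Fin.snoc (Fin.castSucc ∘ σ) (Fin.last m) =
      Fin.snoc (v ∘ σ) x := by
  rw [Fin.comp_snoc, Fin.snoc_last, ← Function.comp_assoc, Fin.snoc_comp_castSucc]

@[simp] lemma eval_relabel : ∀ {n m : ℕ} (σ : Fin n → Fin m) (φ : SF n) (v : Fin m → X),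
    (φ.relabel σ).Eval E v ↔ φ.Eval E (v ∘ σ)
  | _, _, _, mem _ _, _ | _, _, _, eq _ _, _ => Iff.rfl
  | _, _, σ, not φ, v => not_congr (eval_relabel σ φ v)
  | _, _, σ, and φ ψ, v => and_congr (eval_relabel σ φ v) (eval_relabel σ ψ v)
  | _, _, σ, or φ ψ, v => or_congr (eval_relabel σ φ v) (eval_relabel σ ψ v)
  | _, _, σ, bexMem _ φ, v | _, _, σ, bexSub _ φ, v =>
    exists_congr fun x => and_congr_right' <| by rw [eval_relabel, snoc_comp_snoc_castSucc]
  | _, _, σ, ballMem _ φ, v | _, _, σ, ballSub _ φ, v =>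
    forall_congr' fun x => imp_congr_right fun _ => by rw [eval_relabel, snoc_comp_snoc_castSucc]
  | _, _, σ, ex φ, v => exists_congr fun x => by rw [eval_relabel, snoc_comp_snoc_castSucc]
  | _, _, σ, all φ, v => forall_congr' fun x => by rw [eval_relabel, snoc_comp_snoc_castSucc]

@[simp] lemma isDelta0P_relabel : ∀ {n m : ℕ} (σ : Fin n → Fin m) (φ : SF n),
    (φ.relabel σ).IsDelta0P ↔ φ.IsDelta0P
  | _, _, _, mem _ _ | _, _, _, eq _ _ | _, _, _, ex _ | _, _, _, all _ => Iff.rfl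
  | _, _, σ, not φ => isDelta0P_relabel σ φ
  | _, _, σ, and φ ψ | _, _, σ, or φ ψ =>
    and_congr (isDelta0P_relabel σ φ) (isDelta0P_relabel σ ψ)
  | _, _, _, bexMem _ φ | _, _, _, ballMem _ φ | _, _, _, bexSub _ φ | _, _, _, ballSub _ φ =>
    isDelta0P_relabel _ φ

@[simp] lemma eval_imp {n : ℕ} (φ ψ : SF n) (v : Fin n → X) :
    (φ.imp ψ).Eval E v ↔ (φ.Eval E v → ψ.Eval E v) := imp_iff_not_or.symm

end SF

section Absoluteness
variable {E : X → X → Prop}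

lemma subE_restrict_iff {A : Set X} (hA : EndExtSet E A) (x y : A) :
    SubE (restrict E A) x y ↔ SubE E x.1 y.1 :=
  ⟨fun H z hz => H ⟨z, hA z _ x.2 hz⟩ hz, fun H z hz => H z hz⟩

theorem SF.eval_restrict_iff {A : Set X} (hA : PowExtSet E A) : ∀ {n : ℕ} (φ : SF n),
    φ.IsDelta0P → ∀ v : Fin n → A, φ.Eval (restrict E A) v ↔ φ.Eval E (Subtype.val ∘ v)
  | _, mem _ _, _, _ | _, eq _ _, _, _ => by simp [SF.Eval, restrict, Subtype.ext_iff]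
  | _, not φ, h, v => not_congr (eval_restrict_iff hA φ h v)
  | _, and φ ψ, h, v => and_congr (eval_restrict_iff hA φ h.1 v) (eval_restrict_iff hA ψ h.2 v)
  | _, or φ ψ, h, v => or_congr (eval_restrict_iff hA φ h.1 v) (eval_restrict_iff hA ψ h.2 v)
  | _, bexMem i φ, h, v => by
      simp only [SF.Eval, eval_restrict_iff hA φ h, Fin.comp_snoc]
      exact ⟨fun ⟨x, hx, hφ⟩ => ⟨x, hx, hφ⟩, fun ⟨x, hx, hφ⟩ => ⟨⟨x, hA.1 x _ (v i).2 hx⟩, hx, hφ⟩⟩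
  | _, ballMem i φ, h, v => by
      simp only [SF.Eval, eval_restrict_iff hA φ h, Fin.comp_snoc]
      exact ⟨fun H x hx => H ⟨x, hA.1 x _ (v i).2 hx⟩ hx, fun H x hx => H x hx⟩
  | _, bexSub i φ, h, v => by
      simp only [SF.Eval, eval_restrict_iff hA φ h, Fin.comp_snoc, subE_restrict_iff hA.1]
      exact ⟨fun ⟨x, hx, hφ⟩ => ⟨x, hx, hφ⟩, fun ⟨x, hx, hφ⟩ => ⟨⟨x, hA.2 x _ (v i).2 hx⟩, hx, hφ⟩⟩
  | _, ballSub i φ, h, v => by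
      simp only [SF.Eval, eval_restrict_iff hA φ h, Fin.comp_snoc, subE_restrict_iff hA.1]
      exact ⟨fun H x hx => H ⟨x, hA.2 x _ (v i).2 hx⟩ hx, fun H x hx => H x hx⟩

end Absoluteness

section Pairs
variable {E : X → X → Prop}

lemma IsPair.exists_mem_left (hpair : PairAx E) {p x y : X} (hp : IsPair E p x y) :
    ∃ u, E u p ∧ E x u := by
  obtain ⟨u, hu⟩ := hpair x y
  exact ⟨u, (hp u).2 (Or.inr hu), (hu x).2 (Or.inl rfl)⟩

lemma IsPair.exists_mem_right (hpair : PairAx E) {p x y : X} (hp : IsPair E p x y) :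
    ∃ w, E w p ∧ E y w := by
  obtain ⟨w, hw⟩ := hpair x y
  exact ⟨w, (hp w).2 (Or.inr hw), (hw y).2 (Or.inr rfl)⟩

lemma IsPair.inj (hpair : PairAx E) {p x y x' y' : X} (hp : IsPair E p x y)
    (hp' : IsPair E p x' y') : x = x' ∧ y = y' := by
  obtain ⟨s, hs⟩ := hpair x x
  obtain ⟨u, hu⟩ := hpair x y
  obtain ⟨u', hu'⟩ := hpair x' y'
  have hs' : ∀ w, E w s ↔ w = x := fun w => (hs w).trans or_self_iff
  have hx : x = x' := by
    rcases (hp' s).1 ((hp s).2 (Or.inl hs')) with h | h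
    · exact (h x).1 ((hs' x).2 rfl)
    · exact ((hs' x').1 ((h x').2 (Or.inl rfl))).symm
  refine ⟨hx, ?_⟩
  have hy : y = x' ∨ y = y' := by
    rcases (hp' u).1 ((hp u).2 (Or.inr hu)) with h | h
    · exact Or.inl ((h y).1 ((hu y).2 (Or.inr rfl)))
    · exact (h y).1 ((hu y).2 (Or.inr rfl))
  have hy' : y' = x ∨ y' = y := by
    rcases (hp u').1 ((hp' u').2 (Or.inr hu')) with h | h
    · exact Or.inl ((h y').1 ((hu' y').2 (Or.inr rfl)))
    · exact (h y').1 ((hu' y').2 (Or.inr rfl))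
  rcases hy with hy | hy
  · rcases hy' with hy' | hy'
    · exact hy.trans (hx.symm.trans hy'.symm)
    · exact hy'.symm
  · exact hy

lemma exists_isPair (hext : ExtensionalityAx E) (hpair : PairAx E) (x y : X) :
    ∃ p, IsPair E p x y := by
  obtain ⟨s, hs⟩ := hpair x x
  obtain ⟨u, hu⟩ := hpair x y
  obtain ⟨p, hp⟩ := hpair s u
  refine ⟨p, fun z => (hp z).trans ⟨?_, ?_⟩⟩
  · rintro (rfl | rfl)
    · exact Or.inl fun w => (hs w).trans or_self_iff
    · exact Or.inr hu
  · rintro (h | h)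
    · exact Or.inl (hext z s fun w => by rw [h w, hs w, or_self_iff])
    · exact Or.inr (hext z u fun w => (h w).trans (hu w).symm)

lemma FunApp.exists_mem_mem (hpair : PairAx E) {f x y : X} (h : FunApp E f x y) :
    ∃ q, E q f ∧ ∃ u, E u q ∧ E x u := by
  obtain ⟨q, hq, hp⟩ := h
  exact ⟨q, hq, hp.exists_mem_left hpair⟩

lemma FunApp.mono {f f' x y : X} (h : FunApp E f x y) (hf : SubE E f f') : FunApp E f' x y :=
  let ⟨q, hq, hp⟩ := h; ⟨q, hf q hq, hp⟩

end Pairs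

section SetOperations
variable {E : X → X → Prop} (hpair : PairAx E) (hunion : UnionAx E)
include hpair hunion

lemma exists_union (a b : X) : ∃ u, ∀ z, E z u ↔ E z a ∨ E z b := by
  obtain ⟨p, hp⟩ := hpair a b
  obtain ⟨u, hu⟩ := hunion p
  refine ⟨u, fun z => (hu z).trans ⟨?_, ?_⟩⟩
  · rintro ⟨y, hy, hz⟩
    rcases (hp y).1 hy with rfl | rfl
    exacts [Or.inl hz, Or.inr hz]
  · rintro (hz | hz)
    exacts [⟨a, (hp a).2 (Or.inl rfl), hz⟩, ⟨b, (hp b).2 (Or.inr rfl), hz⟩]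

lemma exists_insert (a b : X) : ∃ u, ∀ z, E z u ↔ E z a ∨ z = b := by
  obtain ⟨s, hs⟩ := hpair b b
  obtain ⟨u, hu⟩ := exists_union hpair hunion a s
  exact ⟨u, fun z => by rw [hu, hs, or_self_iff]⟩

lemma exists_forall_mem : ∀ {n : ℕ} (p : Fin n → X) (w : X), ∃ g, E w g ∧ ∀ i, E (p i) g
  | 0, _, w => by
    obtain ⟨g, hg⟩ := hpair w w
    exact ⟨g, (hg w).2 (Or.inl rfl), fun i => i.elim0⟩
  | _ + 1, p, w => by
    obtain ⟨g, hwg, hpg⟩ := exists_forall_mem (Fin.init p) w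
    obtain ⟨g', hg'⟩ := exists_insert hpair hunion g (p (Fin.last _))
    refine ⟨g', (hg' w).2 (Or.inl hwg), Fin.lastCases ((hg' _).2 (Or.inr rfl)) fun i => ?_⟩
    exact (hg' _).2 (Or.inl (hpg i))

end SetOperations

section TransSet
variable {E : X → X → Prop}

lemma subE_of_mem {t y x : X} (ht : TransSet E t) (hy : SubE E y t) (hx : E x y) : SubE E x t :=
  fun z hz => ht x (hy x hx) z hz

lemma forall_snoc_subE {n : ℕ} {t x : X} {v : Fin n → X} (hv : ∀ i, SubE E (v i) t)
    (hx : SubE E x t) : ∀ i, SubE E (Fin.snoc (α := fun _ => X) v x i) t :=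
  Fin.lastCases (by simpa using hx) (by simpa using hv)

end TransSet

@[simp] lemma Matrix.comp_vecCons {α β : Type*} {n : ℕ} (g : α → β) (y : α) (q : Fin n → α) :
    g ∘ Matrix.vecCons y q = Matrix.vecCons (g y) (g ∘ q) :=
  Fin.comp_cons g y q

@[simp] lemma Matrix.comp_vecEmpty {α β : Type*} (g : α → β) : g ∘ (![] : Fin 0 → α) = ![] :=
  funext fun i => i.elim0

namespace SF

/-! Formulas below are templates in de Bruijn levels: in `SF n` the free variables are
`0, …, n - 1` and a quantifier binds variable `n`. `φ.relabel ![i, j, …]` instantiates the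
template `φ` at the variables `i, j, …`. -/

def sngF : SF 2 := (mem 1 0).and (ballMem 0 (eq 2 1))

def uprF : SF 3 := (mem 1 0).and ((mem 2 0).and (ballMem 0 ((eq 3 1).or (eq 3 2))))

def pairF : SF 3 :=
  (bexMem 0 (sngF.relabel ![3, 1])).and ((bexMem 0 (uprF.relabel ![3, 1, 2])).and
    (ballMem 0 ((sngF.relabel ![3, 1]).or (uprF.relabel ![3, 1, 2]))))

def subF : SF 2 := ballMem 0 (mem 2 1)

def transF : SF 1 := ballMem 0 (ballMem 1 (mem 2 0))

def ordF : SF 1 := transF.and (ballMem 0 (transF.relabel ![1]))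

@[simp] lemma isDelta0P_pairF : pairF.IsDelta0P := by simp [pairF, sngF, uprF, IsDelta0P]

variable {E : X → X → Prop}

@[simp] lemma eval_sngF (a x : X) : sngF.Eval E ![a, x] ↔ ∀ w, E w a ↔ w = x := by
  simp only [sngF, Eval, Fin.isValue, Matrix.cons_val_one, Matrix.cons_val_fin_one,
    Matrix.cons_val_zero, Matrix.Fin.snoc_vecCons, Matrix.Fin.snoc_vecEmpty, Matrix.cons_val]
  exact ⟨fun ⟨hx, h⟩ w => ⟨h w, by rintro rfl; exact hx⟩, fun h => ⟨(h x).2 rfl, fun w => (h w).1⟩⟩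

@[simp] lemma eval_uprF (a x y : X) :
    uprF.Eval E ![a, x, y] ↔ ∀ w, E w a ↔ w = x ∨ w = y := by
  simp only [uprF, Eval, Fin.isValue, Matrix.cons_val_one, Matrix.cons_val_zero, Matrix.cons_val,
    Matrix.Fin.snoc_vecCons, Matrix.Fin.snoc_vecEmpty]
  exact ⟨fun ⟨hx, hy, h⟩ w => ⟨h w, by rintro (rfl | rfl) <;> assumption⟩,
    fun h => ⟨(h x).2 (Or.inl rfl), (h y).2 (Or.inr rfl), fun w => (h w).1⟩⟩

@[simp] lemma eval_subF (a b : X) : subF.Eval E ![a, b] ↔ SubE E a b := by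
  simp [subF, SF.Eval, SubE]

@[simp] lemma eval_ordF (a : X) : ordF.Eval E ![a] ↔ IsOrdinal E a := by
  simp [ordF, transF, SF.Eval, IsOrdinal, TransSet]

@[simp] lemma eval_pairF (hext : ExtensionalityAx E) (hpair : PairAx E) (p x y : X) :
    pairF.Eval E ![p, x, y] ↔ IsPair E p x y := by
  simp only [pairF, Eval, Fin.isValue, Matrix.cons_val_zero, Matrix.Fin.snoc_vecCons,
    Matrix.Fin.snoc_vecEmpty, eval_relabel, Matrix.comp_vecCons, Matrix.cons_val,
    Matrix.cons_val_one, Matrix.comp_vecEmpty, eval_sngF, eval_uprF]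
  constructor
  · rintro ⟨⟨s, hsp, hs⟩, ⟨u, hup, hu⟩, hall⟩ z
    refine ⟨hall z, ?_⟩
    rintro (h | h)
    · rwa [hext z s fun w => (h w).trans (hs w).symm]
    · rwa [hext z u fun w => (h w).trans (hu w).symm]
  · intro hp
    obtain ⟨s, hs⟩ := hpair x x
    obtain ⟨u, hu⟩ := hpair x y
    have hs' : ∀ w, E w s ↔ w = x := fun w => (hs w).trans or_self_iff
    exact ⟨⟨s, (hp s).2 (Or.inl hs'), hs'⟩, ⟨u, (hp u).2 (Or.inr hu), hu⟩, fun z hz => (hp z).1 hz⟩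

/-- Replaces each `⊆`-bounded quantifier by an `∈`-bounded one over the new variable `0`, which
is to be read as the power set of a transitive set containing all values of the variables. -/
def unP : {n : ℕ} → SF n → SF (n + 1)
  | _, mem i j => mem i.succ j.succ
  | _, eq i j => eq i.succ j.succ
  | _, not φ => not (unP φ)
  | _, and φ ψ => and (unP φ) (unP ψ)
  | _, or φ ψ => or (unP φ) (unP ψ)
  | _, bexMem i φ => bexMem i.succ (unP φ)
  | _, ballMem i φ => ballMem i.succ (unP φ)
  | n, bexSub i φ => bexMem 0 ((subF.relabel ![Fin.last (n + 1), i.succ.castSucc]).and (unP φ))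
  | n, ballSub i φ => ballMem 0 ((subF.relabel ![Fin.last (n + 1), i.succ.castSucc]).imp (unP φ))
  | _, ex φ => ex (unP φ)
  | _, all φ => all (unP φ)

lemma isDelta0_unP : ∀ {n : ℕ} (φ : SF n), φ.IsDelta0P → (unP φ).IsDelta0
  | _, mem _ _, _ | _, eq _ _, _ => trivial
  | _, not φ, h | _, bexMem _ φ, h | _, ballMem _ φ, h => isDelta0_unP φ h
  | _, and φ ψ, h | _, or φ ψ, h => ⟨isDelta0_unP φ h.1, isDelta0_unP ψ h.2⟩
  | _, bexSub _ φ, h | _, ballSub _ φ, h => ⟨trivial, isDelta0_unP φ h⟩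

lemma eval_unP {t B : X} (ht : TransSet E t) (hB : ∀ z, E z B ↔ SubE E z t) :
    ∀ {n : ℕ} (φ : SF n), φ.IsDelta0P → ∀ v : Fin n → X, (∀ i, SubE E (v i) t) →
      ((unP φ).Eval E (Fin.cons B v) ↔ φ.Eval E v)
  | _, mem _ _, _, _, _ | _, eq _ _, _, _, _ => Iff.rfl
  | _, not φ, h, v, hv => not_congr (eval_unP ht hB φ h v hv)
  | _, and φ ψ, h, v, hv => and_congr (eval_unP ht hB φ h.1 v hv) (eval_unP ht hB ψ h.2 v hv)
  | _, or φ ψ, h, v, hv => or_congr (eval_unP ht hB φ h.1 v hv) (eval_unP ht hB ψ h.2 v hv)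
  | _, bexMem i φ, h, v, hv => by
      simp only [unP, SF.Eval, Fin.cons_succ, ← Fin.cons_snoc_eq_snoc_cons]
      exact exists_congr fun x => and_congr_right fun hx =>
        eval_unP ht hB φ h _ (forall_snoc_subE hv (subE_of_mem ht (hv i) hx))
  | _, ballMem i φ, h, v, hv => by
      simp only [unP, SF.Eval, Fin.cons_succ, ← Fin.cons_snoc_eq_snoc_cons]
      exact forall_congr' fun x => imp_congr_right fun hx =>
        eval_unP ht hB φ h _ (forall_snoc_subE hv (subE_of_mem ht (hv i) hx))
  | _, bexSub i φ, h, v, hv => by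
      simp only [unP, SF.Eval, eval_relabel, Matrix.comp_vecCons, Matrix.comp_vecEmpty, eval_subF,
        Fin.snoc_last, Fin.snoc_castSucc, Fin.cons_succ]
      refine ⟨fun ⟨x, _, hxv, hφ⟩ => ⟨x, hxv, ?_⟩, fun ⟨x, hxv, hφ⟩ => ⟨x, ?_, hxv, ?_⟩⟩
      · rwa [← Fin.cons_snoc_eq_snoc_cons,
          eval_unP ht hB φ h _ (forall_snoc_subE hv fun z hz => hv i z (hxv z hz))] at hφ
      · exact (hB x).2 fun z hz => hv i z (hxv z hz)
      · rwa [← Fin.cons_snoc_eq_snoc_cons,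
          eval_unP ht hB φ h _ (forall_snoc_subE hv fun z hz => hv i z (hxv z hz))]
  | _, ballSub i φ, h, v, hv => by
      simp only [unP, SF.Eval, eval_relabel, Matrix.comp_vecCons, Matrix.comp_vecEmpty, eval_subF,
        eval_imp, Fin.snoc_last, Fin.snoc_castSucc, Fin.cons_succ]
      refine forall_congr' fun x => ⟨fun H hxv => ?_, fun H _ hxv => ?_⟩
      · have hxt : SubE E x t := fun z hz => hv i z (hxv z hz)
        rw [← Fin.cons_snoc_eq_snoc_cons, eval_unP ht hB φ h _ (forall_snoc_subE hv hxt)] at H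
        exact H ((hB x).2 hxt) hxv
      · rw [← Fin.cons_snoc_eq_snoc_cons,
          eval_unP ht hB φ h _ (forall_snoc_subE hv fun z hz => hv i z (hxv z hz))]
        exact H hxv

end SF

namespace ModelM
variable {E : X → X → Prop} (h : ModelM E)
include h

lemma extensionality : ExtensionalityAx E := h.1.1
lemma pair : PairAx E := h.1.2.2.1
lemma union : UnionAx E := h.1.2.2.2.1
lemma tco : TCoAx E := h.1.2.2.2.2.2.1
lemma separation : SeparationScheme E Delta0C := h.1.2.2.2.2.2.2.2.1
lemma setFoundation : SetFoundationAx E := h.1.2.2.2.2.2.2.2.2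
lemma power : PowerAx E := h.2

theorem separation_delta0P : SeparationScheme E Delta0PC := by
  intro n φ hφ p w
  obtain ⟨g, hwg, hpg⟩ := exists_forall_mem h.pair h.union p w
  obtain ⟨t, ht, hgt⟩ := h.tco g
  obtain ⟨B, hB⟩ := h.power t
  obtain ⟨s, hs⟩ := h.separation (n + 1) (SF.unP φ) (SF.isDelta0_unP φ hφ) (Fin.cons B p) w
  refine ⟨s, fun x => (hs x).trans (and_congr_right fun hxw => ?_)⟩
  rw [← Fin.cons_snoc_eq_snoc_cons]
  exact SF.eval_unP ht hB φ hφ _ (forall_snoc_subE (fun i => subE_of_mem ht hgt (hpg i))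
    (subE_of_mem ht (subE_of_mem ht hgt hwg) hxw))

end ModelM

/-- `z ∈ ⋃_{g ∈ b} 𝒫(f(g))`, which is `V_b` when `f` is `g ↦ V_g`. -/
def SubValueBelow (E : X → X → Prop) (f b z : X) : Prop :=
  ∃ g, E g b ∧ ∃ vg, FunApp E f g vg ∧ SubE E z vg

def InStage (E : X → X → Prop) (x a f b v : X) : Prop :=
  IsRK E a f ∧ E b a ∧ FunApp E f b v ∧ E x v

namespace SF

/-- Turns a formula in the variables `v, y` into one in `v, q, w, y`. -/
def liftThree (n : ℕ) : Fin (n + 1) → Fin (n + 3) :=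
  Fin.snoc (fun i => i.castSucc.castSucc.castSucc) (Fin.last (n + 2))

@[simp] lemma snoc_comp_liftThree {n : ℕ} (v : Fin n → X) (q w y : X) :
    (Fin.snoc (Fin.snoc (Fin.snoc v q) w) y : Fin (n + 3) → X) ∘ liftThree n = Fin.snoc v y := by
  rw [liftThree, Fin.comp_snoc, Fin.snoc_last]
  congr 1
  funext i
  simp

/-- `∃ y, FunApp f x y ∧ ψ y`, bounded through `y ∈ w ∈ q ∈ f`. -/
def exFunApp {n : ℕ} (f x : Fin n) (ψ : SF (n + 1)) : SF n :=
  bexMem f <| bexMem (Fin.last n) <| bexMem (Fin.last (n + 1)) <|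
    (pairF.relabel ![(Fin.last n).castSucc.castSucc, x.castSucc.castSucc.castSucc,
      Fin.last (n + 2)]).and (ψ.relabel (liftThree n))

/-- `∀ y, FunApp f x y → ψ y`, bounded through `y ∈ w ∈ q ∈ f`. -/
def allFunApp {n : ℕ} (f x : Fin n) (ψ : SF (n + 1)) : SF n :=
  ballMem f <| ballMem (Fin.last n) <| ballMem (Fin.last (n + 1)) <|
    (pairF.relabel ![(Fin.last n).castSucc.castSucc, x.castSucc.castSucc.castSucc,
      Fin.last (n + 2)]).imp (ψ.relabel (liftThree n))

@[simp] lemma isDelta0P_exFunApp {n : ℕ} (f x : Fin n) (ψ : SF (n + 1)) :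
    (exFunApp f x ψ).IsDelta0P ↔ ψ.IsDelta0P := by
  simp [exFunApp, IsDelta0P]

@[simp] lemma isDelta0P_allFunApp {n : ℕ} (f x : Fin n) (ψ : SF (n + 1)) :
    (allFunApp f x ψ).IsDelta0P ↔ ψ.IsDelta0P := by
  simp [allFunApp, imp, IsDelta0P]

def funcOnF : SF 2 :=
  (ballMem 0 <| bexMem 2 <| bexMem 3 <| bexMem 2 <| bexMem 5 <|
    (pairF.relabel ![2, 4, 6]).and (mem 4 1)).and <|
  (ballMem 0 <| ballMem 2 <| ballMem 3 <| allFunApp 0 4 <| allFunApp 0 4 <| eq 5 6).and <|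
  ballMem 1 <| exFunApp 0 2 <| eq 3 3

def stageF : SF 3 := bexMem 0 <| exFunApp 1 3 <| subF.relabel ![2, 4]

def stagesF : SF 2 :=
  ballMem 0 <| allFunApp 1 2 <|
    (ballMem 3 <| stageF.relabel ![2, 1, 4]).and
      (ballMem 2 <| allFunApp 1 4 <| ballSub 5 <| mem 6 3)

def rkF : SF 2 := (ordF.relabel ![0]).and ((funcOnF.relabel ![1, 0]).and stagesF)

def inStageF : SF 5 :=
  (rkF.relabel ![1, 2]).and <| (mem 3 1).and <| (bexMem 2 (pairF.relabel ![5, 3, 4])).and (mem 0 4)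

def inStageWithinF : SF 2 :=
  bexMem 1 <| bexMem 1 <| bexMem 1 <| bexMem 1 <| inStageF.relabel ![0, 2, 3, 4, 5]

def unionOrdF : SF 2 := bexMem 0 <| bexMem 2 <| bexMem 2 <| (rkF.relabel ![3, 4]).and (mem 1 3)

def unionFunF : SF 2 := bexMem 0 <| bexMem 2 <| bexMem 2 <| (rkF.relabel ![3, 4]).and (mem 1 4)

def disagreeF : SF 4 := (mem 3 2).and <| exFunApp 0 3 <| exFunApp 1 3 <| not (eq 4 5)

lemma isDelta0P_stageF : stageF.IsDelta0P := by simp [stageF, subF, IsDelta0P]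

@[simp] lemma isDelta0P_rkF : rkF.IsDelta0P := by
  simp [rkF, ordF, transF, funcOnF, stagesF, stageF, subF, IsDelta0P]

lemma isDelta0P_inStageF : inStageF.IsDelta0P := by simp [inStageF, IsDelta0P]

lemma isDelta0P_inStageWithinF : inStageWithinF.IsDelta0P := by
  simp [inStageWithinF, inStageF, IsDelta0P]

lemma isDelta0P_unionOrdF : unionOrdF.IsDelta0P := by simp [unionOrdF, IsDelta0P]

lemma isDelta0P_unionFunF : unionFunF.IsDelta0P := by simp [unionFunF, IsDelta0P]

lemma isDelta0P_disagreeF : disagreeF.IsDelta0P := by simp [disagreeF, IsDelta0P]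

section
variable {E : X → X → Prop} (hext : ExtensionalityAx E) (hpair : PairAx E)
include hext hpair

@[simp] lemma eval_exFunApp {n : ℕ} (f x : Fin n) (ψ : SF (n + 1)) (v : Fin n → X) :
    (exFunApp f x ψ).Eval E v ↔ ∃ y, FunApp E (v f) (v x) y ∧ ψ.Eval E (Fin.snoc v y) := by
  simp only [exFunApp, Eval, Fin.snoc_last, eval_relabel, Matrix.comp_vecCons, Fin.snoc_castSucc,
    Matrix.comp_vecEmpty, eval_pairF hext hpair, snoc_comp_liftThree]
  constructor
  · rintro ⟨q, hq, -, -, y, -, hp, hψ⟩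
    exact ⟨y, ⟨q, hq, hp⟩, hψ⟩
  · rintro ⟨y, ⟨q, hq, hp⟩, hψ⟩
    obtain ⟨w, hw, hy⟩ := hp.exists_mem_right hpair
    exact ⟨q, hq, w, hw, y, hy, hp, hψ⟩

@[simp] lemma eval_allFunApp {n : ℕ} (f x : Fin n) (ψ : SF (n + 1)) (v : Fin n → X) :
    (allFunApp f x ψ).Eval E v ↔ ∀ y, FunApp E (v f) (v x) y → ψ.Eval E (Fin.snoc v y) := by
  simp only [allFunApp, Eval, Fin.snoc_last, eval_imp, eval_relabel, Matrix.comp_vecCons,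
    Fin.snoc_castSucc, Matrix.comp_vecEmpty, eval_pairF hext hpair, snoc_comp_liftThree]
  constructor
  · rintro H y ⟨q, hq, hp⟩
    obtain ⟨w, hw, hy⟩ := hp.exists_mem_right hpair
    exact H q hq w hw y hy hp
  · exact fun H q hq w hw y hy hp => H y ⟨q, hq, hp⟩

@[simp] lemma eval_funcOnF (f d : X) : funcOnF.Eval E ![f, d] ↔ IsFuncOn E f d := by
  simp only [funcOnF, Eval, Fin.isValue, Matrix.cons_val_zero, Matrix.Fin.snoc_vecCons,
    Matrix.Fin.snoc_vecEmpty, Matrix.cons_val, eval_relabel, Matrix.comp_vecCons,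
    Matrix.comp_vecEmpty, eval_pairF hext hpair, Matrix.cons_val_one, eval_allFunApp hext hpair,
    Matrix.cons_val_fin_one, eval_exFunApp hext hpair, and_true, IsFuncOn, exists_and_right]
  refine and_congr (forall₂_congr fun q _ => ⟨?_, ?_⟩) (and_congr ⟨?_, ?_⟩ Iff.rfl)
  · rintro ⟨-, -, x, -, -, -, y, -, hp, hx⟩
    exact ⟨x, ⟨y, hp⟩, hx⟩
  · rintro ⟨x, ⟨y, hp⟩, hx⟩
    obtain ⟨u, hu, hxu⟩ := hp.exists_mem_left hpair
    obtain ⟨w, hw, hyw⟩ := hp.exists_mem_right hpair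
    exact ⟨u, hu, x, hxu, w, hw, y, hyw, hp, hx⟩
  · intro H x y y' hy hy'
    obtain ⟨q, hq, u, hu, hxu⟩ := hy.exists_mem_mem hpair
    exact H q hq u hu x hxu y hy y' hy'
  · exact fun H q _ u _ x _ y hy y' hy' => H x y y' hy hy'

@[simp] lemma eval_stageF (a f z : X) : stageF.Eval E ![a, f, z] ↔ SubValueBelow E f a z := by
  simp [stageF, SF.Eval, eval_exFunApp hext hpair, SubValueBelow]

@[simp] lemma eval_stagesF (a f : X) : stagesF.Eval E ![a, f] ↔
    ∀ b vb, E b a → FunApp E f b vb → ∀ z, E z vb ↔ SubValueBelow E f b z := by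
  simp only [stagesF, Eval, Fin.isValue, Matrix.cons_val_zero, Matrix.Fin.snoc_vecCons,
    Matrix.Fin.snoc_vecEmpty, eval_allFunApp hext hpair, Matrix.cons_val_one, Matrix.cons_val,
    eval_relabel, Matrix.comp_vecCons, Matrix.comp_vecEmpty, eval_stageF hext hpair]
  constructor
  · intro H b vb hb hvb z
    exact ⟨(H b hb vb hvb).1 z, fun ⟨g, hg, vg, hvg, hz⟩ => (H b hb vb hvb).2 g hg vg hvg z hz⟩
  · intro H b hb vb hvb
    exact ⟨fun z => (H b vb hb hvb z).1,
      fun g hg vg hvg z hz => (H b vb hb hvb z).2 ⟨g, hg, vg, hvg, hz⟩⟩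

@[simp] lemma eval_rkF (a f : X) : rkF.Eval E ![a, f] ↔ IsRK E a f := by
  simp [rkF, SF.Eval, eval_stagesF hext hpair, eval_funcOnF hext hpair, IsRK, SubValueBelow]

@[simp] lemma eval_inStageF (x a f b v : X) :
    inStageF.Eval E ![x, a, f, b, v] ↔ InStage E x a f b v := by
  simp [inStageF, SF.Eval, eval_rkF hext hpair, eval_pairF hext hpair, InStage, FunApp]

@[simp] lemma eval_inStageWithinF (x t : X) : inStageWithinF.Eval E ![x, t] ↔
    ∃ a, E a t ∧ ∃ f, E f t ∧ ∃ b, E b t ∧ ∃ v, E v t ∧ InStage E x a f b v := by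
  simp [inStageWithinF, SF.Eval, eval_inStageF hext hpair]

@[simp] lemma eval_unionOrdF (c g : X) : unionOrdF.Eval E ![c, g] ↔
    ∃ t, E t c ∧ ∃ a, E a t ∧ ∃ f, E f t ∧ IsRK E a f ∧ E g a := by
  simp [unionOrdF, SF.Eval, eval_rkF hext hpair]

@[simp] lemma eval_unionFunF (c q : X) : unionFunF.Eval E ![c, q] ↔
    ∃ t, E t c ∧ ∃ a, E a t ∧ ∃ f, E f t ∧ IsRK E a f ∧ E q f := by
  simp [unionFunF, SF.Eval, eval_rkF hext hpair]

@[simp] lemma eval_disagreeF (f f' a' b : X) : disagreeF.Eval E ![f, f', a', b] ↔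
    E b a' ∧ ∃ v, FunApp E f b v ∧ ∃ v', FunApp E f' b v' ∧ v ≠ v' := by
  simp [disagreeF, SF.Eval, eval_exFunApp hext hpair]

end

end SF

section Hierarchies
variable {E : X → X → Prop}

lemma subValueBelow_congr {f f' b z : X}
    (h : ∀ g, E g b → ∀ v, FunApp E f g v ↔ FunApp E f' g v) :
    SubValueBelow E f b z ↔ SubValueBelow E f' b z :=
  exists_congr fun g => and_congr_right fun hg => exists_congr fun v => and_congr_left' (h g hg v)

lemma IsOrdinal.of_succ {a a' : X} (ha : IsOrdinal E a) (ha' : ∀ z, E z a' ↔ E z a ∨ z = a) :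
    IsOrdinal E a' := by
  refine ⟨fun y hy z hz => (ha' z).2 (Or.inl ?_), fun y hy => ?_⟩
  · rcases (ha' y).1 hy with hy | rfl
    exacts [ha.1 y hy z hz, hz]
  · rcases (ha' y).1 hy with hy | rfl
    exacts [ha.2 y hy, ha.1]

namespace IsRK
variable {a f : X} (hf : IsRK E a f)
include hf

lemma mem_trans {b g : X} (hb : E b a) (hg : E g b) : E g a := hf.1.1 b hb g hg

lemma exists_funApp {g : X} (hg : E g a) : ∃ v, FunApp E f g v := hf.2.1.2.2 g hg

lemma funApp_unique {g v v' : X} (hv : FunApp E f g v) (hv' : FunApp E f g v') : v = v' :=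
  hf.2.1.2.1 g v v' hv hv'

lemma mem_of_funApp (hpair : PairAx E) {g v : X} (hv : FunApp E f g v) : E g a := by
  obtain ⟨q, hq, hp⟩ := hv
  obtain ⟨x, y, hp', hx⟩ := hf.2.1.1 q hq
  rwa [(hp.inj hpair hp').1]

lemma mem_iff {b v z : X} (hb : E b a) (hv : FunApp E f b v) :
    E z v ↔ SubValueBelow E f b z :=
  hf.2.2 b v hb hv z

end IsRK

namespace ModelM
variable (h : ModelM E)
include h

lemma not_mem_self (x : X) : ¬ E x x := by
  intro hx
  obtain ⟨s, hs⟩ := h.pair x x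
  obtain ⟨m, hms, hmin⟩ := h.setFoundation s ⟨x, (hs x).2 (Or.inl rfl)⟩
  obtain rfl : m = x := ((hs m).1 hms).elim id id
  exact hmin m hx hms

/-- At a least argument of disagreement, found by `Δ₀^𝒫`-separation and set foundation, both
values would be the same union of power sets, hence equal by extensionality. -/
theorem funApp_eq_of_isRK {a f a' f' b v v' : X} (hf : IsRK E a f) (hf' : IsRK E a' f')
    (hb : E b a) (hb' : E b a') (hv : FunApp E f b v) (hv' : FunApp E f' b v') : v = v' := by
  have hext := h.extensionality
  have hpair := h.pair
  by_contra hne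
  obtain ⟨D, hD⟩ := h.separation_delta0P 3 SF.disagreeF SF.isDelta0P_disagreeF ![f, f', a'] a
  simp only [Matrix.Fin.snoc_vecCons, Matrix.Fin.snoc_vecEmpty, SF.eval_disagreeF hext hpair] at hD
  obtain ⟨m, hmD, hmin⟩ := h.setFoundation D ⟨b, (hD b).2 ⟨hb, hb', v, hv, v', hv', hne⟩⟩
  obtain ⟨hma, hma', w, hw, w', hw', hne⟩ := (hD m).1 hmD
  have agree : ∀ g, E g m → ∀ u, FunApp E f g u ↔ FunApp E f' g u := by
    intro g hg u
    have hga := hf.mem_trans hma hg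
    have hga' := hf'.mem_trans hma' hg
    have same : ∀ u u', FunApp E f g u → FunApp E f' g u' → u = u' := fun u u' hu hu' =>
      by_contra fun hne => hmin g hg ((hD g).2 ⟨hga, hga', u, hu, u', hu', hne⟩)
    obtain ⟨u₀, hu₀⟩ := hf.exists_funApp hga
    obtain ⟨u₀', hu₀'⟩ := hf'.exists_funApp hga'
    exact ⟨fun hu => same u u₀' hu hu₀' ▸ hu₀', fun hu => same u₀ u hu₀ hu ▸ hu₀⟩
  exact hne (hext w w' fun z => by
    rw [hf.mem_iff hma hw, hf'.mem_iff hma' hw', subValueBelow_congr agree])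

theorem isRK_sUnion (P : X → X → Prop) (hP : ∀ a f, P a f → IsRK E a f) {α F : X}
    (hα : ∀ g, E g α ↔ ∃ a f, P a f ∧ E g a) (hF : ∀ q, E q F ↔ ∃ a f, P a f ∧ E q f) :
    IsRK E α F := by
  have hsub : ∀ a f, P a f → SubE E f F := fun a f hp q hq => (hF q).2 ⟨a, f, hp, hq⟩
  have hfun : ∀ {x y}, FunApp E F x y → ∃ a f, P a f ∧ E x a ∧ FunApp E f x y := by
    rintro x y ⟨q, hq, hxy⟩
    obtain ⟨a, f, hp, hqf⟩ := (hF q).1 hq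
    exact ⟨a, f, hp, (hP a f hp).mem_of_funApp h.pair ⟨q, hqf, hxy⟩, q, hqf, hxy⟩
  have huniq : ∀ {x y y'}, FunApp E F x y → FunApp E F x y' → y = y' := by
    intro x y y' hy hy'
    obtain ⟨a, f, hp, hx, hy⟩ := hfun hy
    obtain ⟨a', f', hp', hx', hy'⟩ := hfun hy'
    exact h.funApp_eq_of_isRK (hP a f hp) (hP a' f' hp') hx hx' hy hy'
  refine ⟨⟨fun g hg z hz => ?_, fun g hg => ?_⟩,
    ⟨fun q hq => ?_, fun _ _ _ => huniq, fun g hg => ?_⟩, fun b vb hb hvb z => ?_⟩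
  · obtain ⟨a, f, hp, hga⟩ := (hα g).1 hg
    exact (hα z).2 ⟨a, f, hp, (hP a f hp).mem_trans hga hz⟩
  · obtain ⟨a, f, hp, hga⟩ := (hα g).1 hg
    exact (hP a f hp).1.2 g hga
  · obtain ⟨a, f, hp, hqf⟩ := (hF q).1 hq
    obtain ⟨x, y, hxy, hx⟩ := (hP a f hp).2.1.1 q hqf
    exact ⟨x, y, hxy, (hα x).2 ⟨a, f, hp, hx⟩⟩
  · obtain ⟨a, f, hp, hga⟩ := (hα g).1 hg
    obtain ⟨v, hv⟩ := (hP a f hp).exists_funApp hga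
    exact ⟨v, hv.mono (hsub a f hp)⟩
  · obtain ⟨a, f, hp, hba, hfb⟩ := hfun hvb
    have hf := hP a f hp
    rw [hf.mem_iff hba hfb]
    refine subValueBelow_congr fun g hg u => ⟨fun hu => hu.mono (hsub a f hp), fun hu => ?_⟩
    obtain ⟨u', hu'⟩ := hf.exists_funApp (hf.mem_trans hba hg)
    rwa [huniq hu (hu'.mono (hsub a f hp))]

theorem isRK_insert {a f a' f' V p : X} (hf : IsRK E a f)
    (ha' : ∀ z, E z a' ↔ E z a ∨ z = a) (hV : ∀ z, E z V ↔ SubValueBelow E f a z)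
    (hp : IsPair E p a V) (hf' : ∀ q, E q f' ↔ E q f ∨ q = p) : IsRK E a' f' := by
  have hfun : ∀ x y, FunApp E f' x y ↔ FunApp E f x y ∨ (x = a ∧ y = V) := by
    refine fun x y => ⟨fun ⟨q, hq, hxy⟩ => ?_, ?_⟩
    · rcases (hf' q).1 hq with hq | rfl
      · exact Or.inl ⟨q, hq, hxy⟩
      · obtain ⟨rfl, rfl⟩ := hp.inj h.pair hxy
        exact Or.inr ⟨rfl, rfl⟩
    · rintro (hxy | ⟨rfl, rfl⟩)
      exacts [hxy.mono fun q hq => (hf' q).2 (Or.inl hq), ⟨p, (hf' p).2 (Or.inr rfl), hp⟩]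
  have hold : ∀ x, E x a → ∀ y, FunApp E f' x y ↔ FunApp E f x y := fun x hx y => by
    rw [hfun, or_iff_left fun h' : x = a ∧ y = V => h.not_mem_self a (h'.1 ▸ hx)]
  refine ⟨hf.1.of_succ ha', ⟨fun q hq => ?_, fun x y y' hy hy' => ?_, fun x hx => ?_⟩,
    fun b vb hb hvb z => ?_⟩
  · rcases (hf' q).1 hq with hq | rfl
    · obtain ⟨x, y, hxy, hx⟩ := hf.2.1.1 q hq
      exact ⟨x, y, hxy, (ha' x).2 (Or.inl hx)⟩
    · exact ⟨a, V, hp, (ha' a).2 (Or.inr rfl)⟩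
  · rcases (hfun x y).1 hy with hy | ⟨rfl, rfl⟩ <;> rcases (hfun x y').1 hy' with hy' | ⟨hx, rfl⟩
    · exact hf.funApp_unique hy hy'
    · exact absurd (hf.mem_of_funApp h.pair (hx ▸ hy)) (h.not_mem_self a)
    · exact absurd (hf.mem_of_funApp h.pair hy') (h.not_mem_self x)
    · rfl
  · rcases (ha' x).1 hx with hx | rfl
    · obtain ⟨y, hy⟩ := hf.exists_funApp hx
      exact ⟨y, (hold x hx y).2 hy⟩
    · exact ⟨V, (hfun x V).2 (Or.inr ⟨rfl, rfl⟩)⟩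
  · rcases (hfun b vb).1 hvb with hvb | ⟨rfl, rfl⟩
    · have hba := hf.mem_of_funApp h.pair hvb
      rw [hf.mem_iff hba hvb]
      exact subValueBelow_congr fun g hg u => (hold g (hf.mem_trans hba hg) u).symm
    · rw [hV]
      exact subValueBelow_congr fun g hg u => (hold g hg u).symm

lemma exists_stage (a f : X) : ∃ V, ∀ z, E z V ↔ SubValueBelow E f a z := by
  obtain ⟨t, ht, hft⟩ := h.tco f
  obtain ⟨B, hB⟩ := h.power t
  obtain ⟨V, hV⟩ := h.separation_delta0P 2 SF.stageF SF.isDelta0P_stageF ![a, f] B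
  simp only [Matrix.Fin.snoc_vecCons, Matrix.Fin.snoc_vecEmpty,
    SF.eval_stageF h.extensionality h.pair] at hV
  refine ⟨V, fun z => (hV z).trans (and_iff_right_of_imp ?_)⟩
  rintro ⟨g, -, vg, ⟨q, hq, hp⟩, hz⟩
  obtain ⟨w, hw, hvw⟩ := hp.exists_mem_right h.pair
  have hvt : E vg t := ht w (ht q (hft q hq) w hw) vg hvw
  exact (hB z).2 fun u hu => ht vg hvt u (hz u hu)

theorem exists_isRK_succ {a f : X} (hf : IsRK E a f) :
    ∃ a' f' V, IsRK E a' f' ∧ E a a' ∧ FunApp E f' a V ∧ SubE E f f' := by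
  obtain ⟨V, hV⟩ := h.exists_stage a f
  obtain ⟨a', ha'⟩ := exists_insert h.pair h.union a a
  obtain ⟨p, hp⟩ := exists_isPair h.extensionality h.pair a V
  obtain ⟨f', hf'⟩ := exists_insert h.pair h.union f p
  exact ⟨a', f', V, h.isRK_insert hf ha' hV hp hf', (ha' a).2 (Or.inr rfl),
    ⟨p, (hf' p).2 (Or.inr rfl), hp⟩, fun q hq => (hf' q).2 (Or.inl hq)⟩

/-- `y ⊆ V_α`, so `y ∈ V_{α+1}`, a stage of the hierarchy extended twice. -/
theorem exists_inStage_of_forall_mem {α F y : X} (hF : IsRK E α F)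
    (hy : ∀ x, E x y → ∃ b v, E b α ∧ FunApp E F b v ∧ E x v) :
    ∃ a f b v, InStage E y a f b v := by
  obtain ⟨a₁, F₁, V, hF₁, hα, hV, hFF₁⟩ := h.exists_isRK_succ hF
  obtain ⟨a₂, F₂, P, hF₂, ha₁, hP, hF₁F₂⟩ := h.exists_isRK_succ hF₁
  refine ⟨a₂, F₂, a₁, P, hF₂, ha₁, hP, (hF₂.mem_iff ha₁ hP).2 ⟨α, hα, V, hV.mono hF₁F₂, ?_⟩⟩
  intro x hx
  obtain ⟨b, v, hb, hbv, hxv⟩ := hy x hx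
  obtain ⟨g, hg, vg, hgv, hsub⟩ := (hF.mem_iff hb hbv).1 hxv
  exact (hF₁.mem_iff hα hV).2 ⟨g, hF.mem_trans hb hg, vg, hgv.mono hFF₁, hsub⟩

end ModelM

lemma exists_eval_inStageWithinF_iff (hext : ExtensionalityAx E) (hpair : PairAx E)
    (hunion : UnionAx E) (x : X) :
    (∃ t, SF.inStageWithinF.Eval E ![x, t]) ↔ ∃ a f b v, InStage E x a f b v := by
  simp only [SF.eval_inStageWithinF hext hpair]
  constructor
  · rintro ⟨t, a, -, f, -, b, -, v, -, hx⟩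
    exact ⟨a, f, b, v, hx⟩
  · rintro ⟨a, f, b, v, hx⟩
    obtain ⟨t, -, ht⟩ := exists_forall_mem hpair hunion ![a, f, b, v] a
    exact ⟨t, a, ht 0, f, ht 1, b, ht 2, v, ht 3, hx⟩

namespace ModelKPP
variable (h : ModelKPP E)
include h

lemma collection : CollectionScheme E Delta0PC := h.2.1
lemma foundation : FoundationScheme E Pi1PC := h.2.2

/-- Collect witnesses by `Δ₀^𝒫`-collection and take the union of the collected hierarchies. -/
theorem exists_isRK_forall_mem {y : X} (hy : ∀ x, E x y → ∃ a f b v, InStage E x a f b v) :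
    ∃ α F, IsRK E α F ∧ ∀ x, E x y → ∃ b v, E b α ∧ FunApp E F b v ∧ E x v := by
  have hM := h.1
  have hext := hM.extensionality
  have hpair := hM.pair
  obtain ⟨c, hc⟩ := h.collection 0 SF.inStageWithinF SF.isDelta0P_inStageWithinF ![] y fun x hx => by
    simpa using (exists_eval_inStageWithinF_iff hext hpair hM.union x).2 (hy x hx)
  simp only [Matrix.Fin.snoc_vecEmpty, Matrix.Fin.snoc_vecCons,
    SF.eval_inStageWithinF hext hpair] at hc
  obtain ⟨T, hT, hcT⟩ := hM.tco c
  obtain ⟨α, hα⟩ := hM.separation_delta0P 1 SF.unionOrdF SF.isDelta0P_unionOrdF ![c] T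
  obtain ⟨F, hF⟩ := hM.separation_delta0P 1 SF.unionFunF SF.isDelta0P_unionFunF ![c] T
  simp only [Matrix.Fin.snoc_vecEmpty, Matrix.Fin.snoc_vecCons, SF.eval_unionOrdF hext hpair,
    SF.eval_unionFunF hext hpair] at hα hF
  let P a f := ∃ t, E t c ∧ E a t ∧ E f t ∧ IsRK E a f
  have hmemT : ∀ {t u z}, E t c → E u t → E z u → E z T := fun ht hu hz =>
    hT _ (hT _ (hcT _ ht) _ hu) _ hz
  have hα' : ∀ g, E g α ↔ ∃ a f, P a f ∧ E g a := fun g => (hα g).trans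
    ⟨fun ⟨_, t, ht, a, ha, f, hf, hrk, hg⟩ => ⟨a, f, ⟨t, ht, ha, hf, hrk⟩, hg⟩,
      fun ⟨a, f, ⟨t, ht, ha, hf, hrk⟩, hg⟩ => ⟨hmemT ht ha hg, t, ht, a, ha, f, hf, hrk, hg⟩⟩
  have hF' : ∀ q, E q F ↔ ∃ a f, P a f ∧ E q f := fun q => (hF q).trans
    ⟨fun ⟨_, t, ht, a, ha, f, hf, hrk, hq⟩ => ⟨a, f, ⟨t, ht, ha, hf, hrk⟩, hq⟩,
      fun ⟨a, f, ⟨t, ht, ha, hf, hrk⟩, hq⟩ => ⟨hmemT ht hf hq, t, ht, a, ha, f, hf, hrk, hq⟩⟩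
  refine ⟨α, F, hM.isRK_sUnion P (fun a f ⟨_, _, _, _, hrk⟩ => hrk) hα' hF', fun x hx => ?_⟩
  obtain ⟨t, ht, a, ha, f, hf, b, -, v, -, hrk, hb, hv, hxv⟩ := hc x hx
  have hP : P a f := ⟨t, ht, ha, hf, hrk⟩
  exact ⟨b, v, (hα' b).2 ⟨a, f, hP, hb⟩, hv.mono fun q hq => (hF' q).2 ⟨a, f, hP, hq⟩, hxv⟩

theorem exists_inStage (y : X) : ∃ a f b v, InStage E y a f b v := by
  have hM := h.1
  have key := exists_eval_inStageWithinF_iff hM.extensionality hM.pair hM.union (E := E)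
  by_contra hy
  obtain ⟨y₀, hy₀, hmin⟩ := h.foundation 0 (.all (.not SF.inStageWithinF))
    ⟨.not SF.inStageWithinF, SF.isDelta0P_inStageWithinF, rfl⟩ ![]
    ⟨y, by simpa [SF.Eval] using fun t ht => hy ((key y).1 ⟨t, ht⟩)⟩
  simp only [SF.Eval, Matrix.Fin.snoc_vecEmpty, Matrix.Fin.snoc_vecCons] at hy₀ hmin
  obtain ⟨α, F, hF, hcov⟩ :=
    h.exists_isRK_forall_mem fun x hx => (key x).1 (not_forall_not.1 (hmin x hx))
  obtain ⟨t, ht⟩ := (key y₀).2 (hM.exists_inStage_of_forall_mem hF hcov)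
  exact hy₀ t ht

end ModelKPP

theorem InStage.of_restrict {A : Set X} (hA : PowExtSet E A) (hN : ModelM E)
    (hM : ModelM (restrict E A)) {x a f b v : A} (hx : InStage (restrict E A) x a f b v) :
    InStage E x a f b v := by
  have := (SF.eval_inStageF hM.extensionality hM.pair x a f b v).2 hx
  rw [SF.eval_restrict_iff hA _ SF.isDelta0P_inStageF] at this
  simpa [SF.eval_inStageF hN.extensionality hN.pair] using this

end Hierarchies

/-- a powerset-preserving end extension between models of `KP^𝒫`
is a rank extension. -/
theorem rank_ext_of_pow_ext_KPP (X : Type u) (E : X → X → Prop) (A : Set X)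
    (hN : ModelKPP E) (hMmod : ModelKPP (restrict E A)) (hpow : PowExtSet E A) :
    ∀ x y, y ∈ A → RankLe E x y → x ∈ A := by
  intro x y hy hxy
  obtain ⟨a, f, b, v, hyv⟩ := hMmod.exists_inStage ⟨y, hy⟩
  obtain ⟨hrk, hba, hbv, hyv⟩ := hyv.of_restrict hpow hN.1 hMmod.1
  exact hpow.1 x v v.2 (hxy a f b v hrk hba hbv hyv)
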